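/- arXiv:2202.03350 — 2 statements merged into one kernel-verified Lean document; each statement's English description precedes it below -/
import Mathlib

section
/- Let m be a node minimizing the weighted sum of Manhattan distances to a finite multiset of robot positions on the grid ℤ×ℤ. If one robot moves from node a to an adjacent node b lying on a shortest path from a to m (i.e., d(b,m) = d(a,m) - 1), then m still minimizes the weighted sum of distances in the new configuration. -/
/-!
A robot moving from `a` to `b` changes the consistency of every node `x` by
`mdist b x - mdist a x`. At `m` this is exactly `-1`, because `b` lies on a shortest path
from `a` to `m`; at any other node it is at least `-1`, by the triangle inequality through `b`.
So `m` keeps its advantage over every other meeting node.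
-/

/-- Manhattan distance on the grid ℤ × ℤ. -/
def mdist (a b : ℤ × ℤ) : ℕ := (a.1 - b.1).natAbs + (a.2 - b.2).natAbs

/-- Consistency of a node `m`: weighted sum of Manhattan distances to the robots. -/
noncomputable def consistency (lam : (ℤ × ℤ) →₀ ℕ) (m : ℤ × ℤ) : ℕ :=
  lam.sum fun v k => mdist v m * k

theorem mdist_triangle (a b c : ℤ × ℤ) : mdist a c ≤ mdist a b + mdist b c := by
  unfold mdist
  omega

theorem consistency_add (μ ν : (ℤ × ℤ) →₀ ℕ) (x : ℤ × ℤ) :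
    consistency (μ + ν) x = consistency μ x + consistency ν x :=
  Finsupp.sum_add_index' (fun _ => mul_zero _) fun _ _ _ => mul_add _ _ _

theorem consistency_single_one (a x : ℤ × ℤ) :
    consistency (Finsupp.single a 1) x = mdist a x := by
  simp [consistency]

theorem consistency_move_add_mdist (lam : (ℤ × ℤ) →₀ ℕ) {a : ℤ × ℤ} (ha : 1 ≤ lam a)
    (b x : ℤ × ℤ) :
    consistency (lam + Finsupp.single b 1 - Finsupp.single a 1) x + mdist a x
      = consistency lam x + mdist b x := by
  have hle : Finsupp.single a 1 ≤ lam + Finsupp.single b 1 :=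
    Finsupp.single_le_iff.mpr (ha.trans (Nat.le_add_right _ _))
  rw [← consistency_single_one, ← consistency_single_one, ← consistency_add,
    ← consistency_add, tsub_add_cancel_of_le hle]

theorem stmt_0_general (lam : (ℤ × ℤ) →₀ ℕ) (M : Finset (ℤ × ℤ))
    (m a b : ℤ × ℤ)
    (hmin : ∀ m' ∈ M, consistency lam m ≤ consistency lam m')
    (ha : 1 ≤ lam a) (hab : mdist a b = 1) (hb : mdist b m + 1 = mdist a m) :
    ∀ m' ∈ M,
      consistency (lam + Finsupp.single b 1 - Finsupp.single a 1) m
        ≤ consistency (lam + Finsupp.single b 1 - Finsupp.single a 1) m' := by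
  intro m' hm'
  have hmove_m := consistency_move_add_mdist lam ha b m
  have hmove_m' := consistency_move_add_mdist lam ha b m'
  have htriangle := mdist_triangle a b m'
  have hle := hmin m' hm'
  omega

theorem stmt_0 (lam : (ℤ × ℤ) →₀ ℕ) (M : Finset (ℤ × ℤ)) (hM : M.Nonempty)
    (m a b : ℤ × ℤ) (hm : m ∈ M)
    (hmin : ∀ m' ∈ M, consistency lam m ≤ consistency lam m')
    (ha : 1 ≤ lam a) (hab : mdist a b = 1) (hb : mdist b m + 1 = mdist a m) :
    ∀ m' ∈ M,
      consistency (lam + Finsupp.single b 1 - Finsupp.single a 1) m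
        ≤ consistency (lam + Finsupp.single b 1 - Finsupp.single a 1) m' :=
  stmt_0_general lam M m a b hmin ha hab hb
end

section
/- Suppose a configuration on ℤ×ℤ is invariant under rotation by 180° about a center point c (i.e., both the robot-count function λ and the meeting-node set M are preserved by the map v ↦ 2c - v), and c is itself a meeting node. Then c is a Weber node: c minimizes the consistency c(m) = Σ_v d(v,m)·λ(v) over all meeting nodes m ∈ M. -/
/-- Rotation by 180° about the node `c`. -/
def rot180 (c v : ℤ × ℤ) : ℤ × ℤ := (2 * c.1 - v.1, 2 * c.2 - v.2)

/-! Each robot at `v` is paired with its image at `rot180 c v`. Since `c` is the midpoint of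
`v` and `rot180 c v`, the triangle inequality gives `d(v, m) + d(rot180 c v, m) ≥ 2 d(v, c)`
for every node `m`; summing over all robots and using the symmetry of `λ` to identify the two
resulting sums yields `2 c(m) ≥ 2 c(c)`. -/

lemma Finsupp.sum_comp_perm_of_invariant {α M N : Type*} [Zero M] [AddCommMonoid N]
    (f : α →₀ M) (e : Equiv.Perm α) (he : ∀ a, f (e a) = f a) (g : α → M → N) :
    (f.sum fun a b => g (e a) b) = f.sum g :=
  Finset.sum_equiv e (fun a => by simp only [Finsupp.mem_support_iff, he])
    (fun a _ => by rw [he])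

lemma rot180_involutive (c : ℤ × ℤ) : Function.Involutive (rot180 c) := by
  intro v
  simp only [rot180, Prod.ext_iff]
  omega

lemma two_mul_mdist_center_le (c v m : ℤ × ℤ) :
    2 * mdist v c ≤ mdist v m + mdist (rot180 c v) m := by
  simp only [mdist, rot180]
  omega

lemma consistency_eq_sum_rot180 {lam : (ℤ × ℤ) →₀ ℕ} {c : ℤ × ℤ}
    (hsym : ∀ v, lam (rot180 c v) = lam v) (m : ℤ × ℤ) :
    (lam.sum fun v k => mdist (rot180 c v) m * k) = consistency lam m :=
  Finsupp.sum_comp_perm_of_invariant lam (rot180_involutive c).toPerm hsym fun v k => mdist v m * k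

lemma consistency_center_le {lam : (ℤ × ℤ) →₀ ℕ} {c : ℤ × ℤ}
    (hsym : ∀ v, lam (rot180 c v) = lam v) (m : ℤ × ℤ) :
    consistency lam c ≤ consistency lam m := by
  suffices 2 * consistency lam c ≤ 2 * consistency lam m by omega
  calc 2 * consistency lam c = lam.sum fun v k => 2 * mdist v c * k := by
        simp only [consistency, Finsupp.mul_sum, mul_assoc]
    _ ≤ lam.sum fun v k => (mdist v m + mdist (rot180 c v) m) * k :=
        Finsupp.sum_le_sum fun v _ => Nat.mul_le_mul_right _ (two_mul_mdist_center_le c v m)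
    _ = consistency lam m + lam.sum fun v k => mdist (rot180 c v) m * k := by
        simp only [add_mul, Finsupp.sum_add, consistency]
    _ = 2 * consistency lam m := by
        rw [consistency_eq_sum_rot180 hsym, two_mul]

theorem stmt_5_general (lam : (ℤ × ℤ) →₀ ℕ) (M : Finset (ℤ × ℤ)) (c : ℤ × ℤ)
    (hsym : ∀ v, lam (rot180 c v) = lam v) :
    ∀ m ∈ M, consistency lam c ≤ consistency lam m :=
  fun m _ => consistency_center_le hsym m

theorem stmt_5 (lam : (ℤ × ℤ) →₀ ℕ) (M : Finset (ℤ × ℤ)) (c : ℤ × ℤ)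
    (hsym : ∀ v, lam (rot180 c v) = lam v)
    (hMsym : ∀ m ∈ M, rot180 c m ∈ M)
    (hc : c ∈ M) :
    ∀ m ∈ M, consistency lam c ≤ consistency lam m :=
  stmt_5_general lam M c hsym
end
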